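/- arXiv:2004.12567 — 5 statements merged into one kernel-verified Lean document; each statement's English description precedes it below -/
import Mathlib

section
/- (Theorem 1, forward inclusion.) Let A be a real n×n matrix, B a real n×m matrix, and Ξ a real n×q matrix. Let Γ = [−B Ξ] be the n×(m+q) horizontal block concatenation, let G be a Moore–Penrose pseudoinverse of Γ, and set Q_X = [I_m 0] G A and Q_Λ = [I_m 0](I − G Γ), where [I_m 0] denotes the m×(m+q) matrix selecting the first block of rows. Suppose X is a real n×n matrix with Γ G (A X) = A X. Then for every real (m+q)×n matrix Λ, the matrix Û = Q_X X + Q_Λ Λ satisfies: there exists a real q×n matrix Θ with A X + B Û = Ξ Θ. -/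
/-
Put `V = G (A X) + (I - G Γ) Λ`. The Penrose equation `Γ G Γ = Γ` gives `Γ (I - G Γ) = 0`, so
with `Γ G (A X) = A X` we get `Γ V = A X`. Since `[I_m 0]` reads off the upper block `V₁` of `V`,
`Û = V₁`, and splitting `Γ V = -B V₁ + Ξ V₂` along the blocks yields `A X + B Û = Ξ V₂`.
-/

open Matrix

/-- `G` is a Moore–Penrose pseudoinverse of `Γ`: the four Penrose equations hold. -/
def IsMoorePenroseInv {m k : Type*} [Fintype m] [Fintype k]
    (Γ : Matrix m k ℝ) (G : Matrix k m ℝ) : Prop :=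
  Γ * G * Γ = Γ ∧ G * Γ * G = G ∧ (Γ * G)ᵀ = Γ * G ∧ (G * Γ)ᵀ = G * Γ

namespace Matrix

variable {α : Type*} {l m n p₁ p₂ : Type*} [Fintype p₁] [Fintype p₂]

theorem fromCols_mul_eq_add [Semiring α] (A₁ : Matrix m p₁ α) (A₂ : Matrix m p₂ α)
    (V : Matrix (p₁ ⊕ p₂) n α) :
    fromCols A₁ A₂ * V = A₁ * V.toRows₁ + A₂ * V.toRows₂ := by
  rw [← fromRows_toRows V, fromCols_mul_fromRows, toRows₁_fromRows, toRows₂_fromRows]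

theorem fromCols_one_zero_mul [Semiring α] [DecidableEq p₁] (V : Matrix (p₁ ⊕ p₂) n α) :
    fromCols (1 : Matrix p₁ p₁ α) (0 : Matrix p₁ p₂ α) * V = V.toRows₁ := by
  rw [fromCols_mul_eq_add, Matrix.one_mul, Matrix.zero_mul, add_zero]

theorem mul_one_sub_mul_self_eq_zero [Ring α] [Fintype l] [Fintype m] [DecidableEq m]
    {Γ : Matrix l m α} {G : Matrix m l α} (h : Γ * G * Γ = Γ) :
    Γ * (1 - G * Γ) = 0 := by
  rw [Matrix.mul_sub, Matrix.mul_one, ← Matrix.mul_assoc, h, sub_self]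

theorem add_mul_toRows₁_eq_of_fromCols_neg_mul_eq [Ring α] {C : Matrix m n α}
    (B : Matrix m p₁ α) (Ξ : Matrix m p₂ α) {V : Matrix (p₁ ⊕ p₂) n α}
    (hV : fromCols (-B) Ξ * V = C) :
    C + B * V.toRows₁ = Ξ * V.toRows₂ := by
  rw [← hV, fromCols_mul_eq_add, Matrix.neg_mul]
  abel

end Matrix

theorem feasible_set_forward (n m q : ℕ)
    (A : Matrix (Fin n) (Fin n) ℝ) (B : Matrix (Fin n) (Fin m) ℝ)
    (Ξ : Matrix (Fin n) (Fin q) ℝ)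
    (Γ : Matrix (Fin n) (Fin m ⊕ Fin q) ℝ) (hΓ : Γ = Matrix.fromCols (-B) Ξ)
    (G : Matrix (Fin m ⊕ Fin q) (Fin n) ℝ) (hG : IsMoorePenroseInv Γ G)
    (E : Matrix (Fin m) (Fin m ⊕ Fin q) ℝ)
    (hE : E = Matrix.fromCols (1 : Matrix (Fin m) (Fin m) ℝ)
      (0 : Matrix (Fin m) (Fin q) ℝ))
    (QX : Matrix (Fin m) (Fin n) ℝ) (hQX : QX = E * G * A)
    (QΛ : Matrix (Fin m) (Fin m ⊕ Fin q) ℝ) (hQΛ : QΛ = E * (1 - G * Γ))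
    (X : Matrix (Fin n) (Fin n) ℝ)
    (hX : Γ * G * (A * X) = A * X) :
    ∀ Λ : Matrix (Fin m ⊕ Fin q) (Fin n) ℝ,
      ∃ Θ : Matrix (Fin q) (Fin n) ℝ,
        A * X + B * (QX * X + QΛ * Λ) = Ξ * Θ := by
  intro Λ
  set V := G * (A * X) + (1 - G * Γ) * Λ
  have hU : QX * X + QΛ * Λ = V.toRows₁ := by
    rw [← fromCols_one_zero_mul V, ← hE, hQX, hQΛ, Matrix.mul_add, Matrix.mul_assoc,
      Matrix.mul_assoc, Matrix.mul_assoc]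
  have hΓV : Γ * V = A * X := by
    rw [Matrix.mul_add, ← Matrix.mul_assoc, hX, ← Matrix.mul_assoc,
      mul_one_sub_mul_self_eq_zero hG.1, Matrix.zero_mul, add_zero]
  rw [hΓ] at hΓV
  exact ⟨V.toRows₂, hU ▸ add_mul_toRows₁_eq_of_fromCols_neg_mul_eq B Ξ hΓV⟩
end

section
/- (Theorem 1, reverse inclusion.) Let A be a real n×n matrix, B a real n×m matrix, and Ξ a real n×q matrix. Let Γ = [−B Ξ] be the n×(m+q) horizontal block concatenation, let G be a Moore–Penrose pseudoinverse of Γ, and set Q_X = [I_m 0] G A and Q_Λ = [I_m 0](I − G Γ). Let X be a real n×n matrix. If a real m×n matrix Û satisfies A X + B Û = Ξ Θ for some real q×n matrix Θ, then there exists a real (m+q)×n matrix Λ such that Û = Q_X X + Q_Λ Λ. -/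
open Matrix

/-!
Stacking `Û` on top of `Θ` gives a matrix `Λ` with `[I 0] Λ = Û` and `Γ Λ = Ξ Θ - B Û = A X`.
Splitting `Λ = G (Γ Λ) + (I - G Γ) Λ` and applying `[I 0]` gives `Û = Q_X X + Q_Λ Λ`.
-/

namespace Matrix

variable {R : Type*} {k l m n p q : Type*} [Fintype m] [Fintype q]

theorem fromCols_one_zero_mul_fromRows [Ring R] [DecidableEq m]
    (U : Matrix m n R) (Θ : Matrix q n R) :
    fromCols (1 : Matrix m m R) (0 : Matrix m q R) * fromRows U Θ = U := by
  rw [fromCols_mul_fromRows, Matrix.one_mul, Matrix.zero_mul, add_zero]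

theorem fromCols_neg_mul_fromRows [Ring R] (B : Matrix l m R) (Ξ : Matrix l q R)
    (U : Matrix m n R) (Θ : Matrix q n R) :
    fromCols (-B) Ξ * fromRows U Θ = Ξ * Θ - B * U := by
  rw [fromCols_mul_fromRows, Matrix.neg_mul, neg_add_eq_sub]

theorem eq_mul_mul_add_one_sub_mul_mul [Ring R] [Fintype k] [Fintype l] [DecidableEq k]
    (G : Matrix k l R) (Γ : Matrix l k R) (Z : Matrix k p R) :
    Z = G * (Γ * Z) + (1 - G * Γ) * Z := by
  rw [Matrix.sub_mul, Matrix.one_mul, Matrix.mul_assoc, add_sub_cancel]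

end Matrix

theorem feasible_set_reverse_general (n m q : ℕ)
    (A : Matrix (Fin n) (Fin n) ℝ) (B : Matrix (Fin n) (Fin m) ℝ)
    (Ξ : Matrix (Fin n) (Fin q) ℝ)
    (Γ : Matrix (Fin n) (Fin m ⊕ Fin q) ℝ) (hΓ : Γ = Matrix.fromCols (-B) Ξ)
    (G : Matrix (Fin m ⊕ Fin q) (Fin n) ℝ)
    (E : Matrix (Fin m) (Fin m ⊕ Fin q) ℝ)
    (hE : E = Matrix.fromCols (1 : Matrix (Fin m) (Fin m) ℝ)
      (0 : Matrix (Fin m) (Fin q) ℝ))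
    (QX : Matrix (Fin m) (Fin n) ℝ) (hQX : QX = E * G * A)
    (QΛ : Matrix (Fin m) (Fin m ⊕ Fin q) ℝ) (hQΛ : QΛ = E * (1 - G * Γ))
    (X : Matrix (Fin n) (Fin n) ℝ)
    (U : Matrix (Fin m) (Fin n) ℝ)
    (hU : ∃ Θ : Matrix (Fin q) (Fin n) ℝ, A * X + B * U = Ξ * Θ) :
    ∃ Λ : Matrix (Fin m ⊕ Fin q) (Fin n) ℝ, U = QX * X + QΛ * Λ := by
  obtain ⟨Θ, hΘ⟩ := hU
  refine ⟨fromRows U Θ, ?_⟩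
  have hΓΛ : Γ * fromRows U Θ = A * X := by
    rw [hΓ, fromCols_neg_mul_fromRows, ← hΘ, add_sub_cancel_right]
  calc U = E * fromRows U Θ := by rw [hE, fromCols_one_zero_mul_fromRows]
    _ = E * (G * (Γ * fromRows U Θ) + (1 - G * Γ) * fromRows U Θ) := by
      rw [← eq_mul_mul_add_one_sub_mul_mul]
    _ = QX * X + QΛ * fromRows U Θ := by
      rw [hΓΛ, hQX, hQΛ, Matrix.mul_add, Matrix.mul_assoc, Matrix.mul_assoc, Matrix.mul_assoc]

theorem feasible_set_reverse (n m q : ℕ)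
    (A : Matrix (Fin n) (Fin n) ℝ) (B : Matrix (Fin n) (Fin m) ℝ)
    (Ξ : Matrix (Fin n) (Fin q) ℝ)
    (Γ : Matrix (Fin n) (Fin m ⊕ Fin q) ℝ) (hΓ : Γ = Matrix.fromCols (-B) Ξ)
    (G : Matrix (Fin m ⊕ Fin q) (Fin n) ℝ) (hG : IsMoorePenroseInv Γ G)
    (E : Matrix (Fin m) (Fin m ⊕ Fin q) ℝ)
    (hE : E = Matrix.fromCols (1 : Matrix (Fin m) (Fin m) ℝ)
      (0 : Matrix (Fin m) (Fin q) ℝ))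
    (QX : Matrix (Fin m) (Fin n) ℝ) (hQX : QX = E * G * A)
    (QΛ : Matrix (Fin m) (Fin m ⊕ Fin q) ℝ) (hQΛ : QΛ = E * (1 - G * Γ))
    (X : Matrix (Fin n) (Fin n) ℝ)
    (U : Matrix (Fin m) (Fin n) ℝ)
    (hU : ∃ Θ : Matrix (Fin q) (Fin n) ℝ, A * X + B * U = Ξ * Θ) :
    ∃ Λ : Matrix (Fin m ⊕ Fin q) (Fin n) ℝ, U = QX * X + QΛ * Λ :=
  feasible_set_reverse_general n m q A B Ξ Γ hΓ G E hE QX hQX QΛ hQΛ X U hU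
end

section
/- (Theorem 1, necessity of the null-space condition.) Let A be a real n×n matrix, B a real n×m matrix, Ξ a real n×q matrix, Γ = [−B Ξ] the horizontal block concatenation, and G a Moore–Penrose pseudoinverse of Γ. Let X be a real n×n matrix. If there exist matrices Û (m×n) and Θ (q×n) with A X + B Û = Ξ Θ, then (Γ G − I) A X = 0, i.e., every column of X lies in null(Ψ_x) for Ψ_x = (Γ G − I) A. -/
open Matrix

/-!
Rewriting the hypothesis as `A X = [−B  Ξ] [Û; Θ] = Γ [Û; Θ]` puts the columns of `A X` in the
range of `Γ`, and `Γ G` fixes that range because `Γ G Γ = Γ`.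
-/

namespace Matrix

variable {R : Type*} [Ring R] {l m n p : Type*} [Fintype m] [Fintype n]

theorem fromCols_neg_mul_fromRows_of_add_mul_eq {M : Matrix l p R} {B : Matrix l m R}
    {Ξ : Matrix l n R} {U : Matrix m p R} {Θ : Matrix n p R} (h : M + B * U = Ξ * Θ) :
    fromCols (-B) Ξ * fromRows U Θ = M := by
  rw [fromCols_mul_fromRows, Matrix.neg_mul, ← h]
  abel

theorem mul_sub_one_mul_mul_eq_zero_of_mul_mul_eq [Fintype l] [DecidableEq l] {Γ : Matrix l m R}
    {G : Matrix m l R} (hΓG : Γ * G * Γ = Γ) (Y : Matrix m p R) :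
    (Γ * G - 1) * (Γ * Y) = 0 := by
  rw [Matrix.sub_mul, Matrix.one_mul, ← Matrix.mul_assoc, hΓG, sub_self]

theorem mulVec_col_eq_zero_of_mul_eq_zero [DecidableEq n] {M : Matrix l m R} {X : Matrix m n R}
    (h : M * X = 0) (j : n) : M *ᵥ X.col j = 0 := by
  rw [← mulVec_single_one, mulVec_mulVec, h, zero_mulVec]

end Matrix

theorem null_space_condition_necessary (n m q : ℕ)
    (A : Matrix (Fin n) (Fin n) ℝ) (B : Matrix (Fin n) (Fin m) ℝ)
    (Ξ : Matrix (Fin n) (Fin q) ℝ)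
    (Γ : Matrix (Fin n) (Fin m ⊕ Fin q) ℝ) (hΓ : Γ = Matrix.fromCols (-B) Ξ)
    (G : Matrix (Fin m ⊕ Fin q) (Fin n) ℝ) (hG : IsMoorePenroseInv Γ G)
    (X : Matrix (Fin n) (Fin n) ℝ)
    (hU : ∃ (U : Matrix (Fin m) (Fin n) ℝ) (Θ : Matrix (Fin q) (Fin n) ℝ),
      A * X + B * U = Ξ * Θ) :
    (Γ * G - 1) * A * X = 0 ∧
      ∀ j : Fin n, ((Γ * G - 1) * A).mulVec (fun i => X i j) = 0 := by
  obtain ⟨U, Θ, h⟩ := hU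
  have hAX : A * X = Γ * fromRows U Θ := by
    rw [hΓ, fromCols_neg_mul_fromRows_of_add_mul_eq h]
  have hzero : (Γ * G - 1) * A * X = 0 := by
    rw [Matrix.mul_assoc, hAX, mul_sub_one_mul_mul_eq_zero_of_mul_mul_eq hG.1]
  exact ⟨hzero, mulVec_col_eq_zero_of_mul_eq_zero hzero⟩
end

section
/- Let P be a real symmetric positive semidefinite n×n matrix, and let C_X (p×n), D_Λ (p×k), A_X (n×n), B_Λ (n×k), X (n×n) be real matrices. Suppose M = D_Λᵀ D_Λ + B_Λᵀ P B_Λ is invertible, and set L = −M⁻¹ (D_Λᵀ C_X + B_Λᵀ P A_X). Then Λ* = L X is a global minimizer of f(Λ) = ‖C_X X + D_Λ Λ‖_F² + tr((A_X X + B_Λ Λ)ᵀ P (A_X X + B_Λ Λ)) over all real k×n matrices Λ. -/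
/-!
Writing `Λ = L X + E`, the objective is a quadratic in `E` whose linear part is
`2 tr(Eᵀ (D_Λᵀ W₁ + B_Λᵀ P W₂))`, where `W₁, W₂` are the two residuals at `L X`. Since
`M L = -(D_Λᵀ C_X + B_Λᵀ P A_X)`, the point `L X` solves the normal equation
`D_Λᵀ W₁ + B_Λᵀ P W₂ = 0`, so the linear part vanishes, and the
remaining quadratic part `‖D_Λ E‖_F² + tr((B_Λ E)ᵀ P (B_Λ E))` is nonnegative because `P ⪰ 0`.
-/

open Matrix

/-- The squared Frobenius norm: the sum of squares of all entries. -/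
def frobSq {a b : ℕ} (M : Matrix (Fin a) (Fin b) ℝ) : ℝ := ∑ i, ∑ j, (M i j) ^ 2

lemma frobSq_eq_trace {a b : ℕ} (A : Matrix (Fin a) (Fin b) ℝ) :
    frobSq A = trace (Aᵀ * A) := by
  simp only [frobSq, trace, diag, mul_apply, transpose_apply, sq]
  exact Finset.sum_comm

namespace Matrix

variable {m c R : Type*} [Fintype m] [Fintype c]

lemma PosSemidef.trace_transpose_mul_mul_nonneg {P : Matrix m m ℝ} (hP : P.PosSemidef)
    (Y : Matrix m c ℝ) : 0 ≤ trace (Yᵀ * P * Y) :=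
  (hP.conjTranspose_mul_mul_same Y).trace_nonneg

lemma trace_transpose_add_mul_mul_add [CommRing R] {P : Matrix m m R} (hP : P.IsSymm)
    (W Y : Matrix m c R) :
    trace ((W + Y)ᵀ * P * (W + Y)) =
      trace (Wᵀ * P * W) + 2 * trace (Yᵀ * (P * W)) + trace (Yᵀ * P * Y) := by
  have hcross : trace (Wᵀ * (P * Y)) = trace (Yᵀ * (P * W)) := by
    rw [← trace_transpose, transpose_mul, transpose_mul, transpose_transpose, hP.eq,
      Matrix.mul_assoc]
  simp only [transpose_add, Matrix.add_mul, Matrix.mul_add, trace_add, hcross, Matrix.mul_assoc]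
  ring

lemma trace_transpose_add_mul_add [CommRing R] (W Y : Matrix m c R) :
    trace ((W + Y)ᵀ * (W + Y)) = trace (Wᵀ * W) + 2 * trace (Yᵀ * W) + trace (Yᵀ * Y) := by
  classical
  simpa using trace_transpose_add_mul_mul_add (P := (1 : Matrix m m R)) isSymm_one W Y

end Matrix

section LeastSquares

variable {a n k q : Type*} [Fintype a] [Fintype n] [Fintype k]

lemma objective_le_of_normal_equation [Fintype q] {P : Matrix n n ℝ} (hP : P.PosSemidef)
    (C : Matrix a q ℝ) (D : Matrix a k ℝ) (A : Matrix n q ℝ) (B : Matrix n k ℝ)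
    {Λ₀ : Matrix k q ℝ} (hΛ₀ : Dᵀ * (C + D * Λ₀) + Bᵀ * P * (A + B * Λ₀) = 0)
    (Λ : Matrix k q ℝ) :
    trace ((C + D * Λ₀)ᵀ * (C + D * Λ₀)) + trace ((A + B * Λ₀)ᵀ * P * (A + B * Λ₀)) ≤
      trace ((C + D * Λ)ᵀ * (C + D * Λ)) + trace ((A + B * Λ)ᵀ * P * (A + B * Λ)) := by
  set E := Λ - Λ₀
  have hΛ : Λ = Λ₀ + E := (add_sub_cancel Λ₀ Λ).symm
  have hcross : trace ((D * E)ᵀ * (C + D * Λ₀)) + trace ((B * E)ᵀ * (P * (A + B * Λ₀))) = 0 := by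
    rw [← trace_add, transpose_mul, transpose_mul, Matrix.mul_assoc, Matrix.mul_assoc,
      ← Matrix.mul_add, ← Matrix.mul_assoc Bᵀ, hΛ₀, Matrix.mul_zero, trace_zero]
  have hD : 0 ≤ trace ((D * E)ᵀ * (D * E)) :=
    (posSemidef_conjTranspose_mul_self (D * E)).trace_nonneg
  have hB := hP.trace_transpose_mul_mul_nonneg (B * E)
  rw [hΛ, Matrix.mul_add D, Matrix.mul_add B, ← add_assoc C, ← add_assoc A,
    trace_transpose_add_mul_add (C + D * Λ₀),
    trace_transpose_add_mul_mul_add (isHermitian_iff_isSymm.mp hP.isHermitian) (A + B * Λ₀)]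
  linarith

lemma normal_equation_of_mul_eq {R : Type*} [Ring R] (C : Matrix a n R) (D : Matrix a k R)
    (A P : Matrix n n R) (B : Matrix n k R) (X : Matrix n q R) {L : Matrix k n R}
    (hL : (Dᵀ * D + Bᵀ * P * B) * L = -(Dᵀ * C + Bᵀ * P * A)) :
    Dᵀ * (C * X + D * (L * X)) + Bᵀ * P * (A * X + B * (L * X)) = 0 := by
  calc _ = (Dᵀ * C + Bᵀ * P * A) * X + (Dᵀ * D + Bᵀ * P * B) * L * X := by
        simp only [Matrix.mul_add, Matrix.add_mul, Matrix.mul_assoc]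
        abel
    _ = 0 := by rw [hL, Matrix.neg_mul, add_neg_cancel]

end LeastSquares

theorem closed_form_minimizer (n p k : ℕ)
    (P : Matrix (Fin n) (Fin n) ℝ) (hP : P.PosSemidef)
    (CX : Matrix (Fin p) (Fin n) ℝ) (DΛ : Matrix (Fin p) (Fin k) ℝ)
    (AX : Matrix (Fin n) (Fin n) ℝ) (BΛ : Matrix (Fin n) (Fin k) ℝ)
    (X : Matrix (Fin n) (Fin n) ℝ)
    (M : Matrix (Fin k) (Fin k) ℝ) (hM : M = DΛᵀ * DΛ + BΛᵀ * P * BΛ)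
    (hMinv : IsUnit M)
    (L : Matrix (Fin k) (Fin n) ℝ) (hL : L = -(M⁻¹ * (DΛᵀ * CX + BΛᵀ * P * AX)))
    (f : Matrix (Fin k) (Fin n) ℝ → ℝ)
    (hf : f = fun Λ => frobSq (CX * X + DΛ * Λ) +
      Matrix.trace ((AX * X + BΛ * Λ)ᵀ * P * (AX * X + BΛ * Λ))) :
    ∀ Λ : Matrix (Fin k) (Fin n) ℝ, f (L * X) ≤ f Λ := by
  have hML : M * L = -(DΛᵀ * CX + BΛᵀ * P * AX) := by
    rw [hL, Matrix.mul_neg, ← Matrix.mul_assoc,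
      mul_nonsing_inv _ ((isUnit_iff_isUnit_det M).mp hMinv), Matrix.one_mul]
  subst hf hM
  simpa only [frobSq_eq_trace] using
    objective_le_of_normal_equation hP _ DΛ _ BΛ (normal_equation_of_mul_eq CX DΛ AX P BΛ X hML)
end

section
/- (Boundary-condition correctness of the DP backward recursion, Algorithm 1.) Let A be a real n×n matrix, B a real n×m matrix, and T ≥ 1. Suppose given real n×q matrices Ξ[1], ..., Ξ[T+1] with Ξ[T+1] = 0, and for each τ = 1, ..., T let Γ[τ] = [−B Ξ[τ+1]] (horizontal block concatenation), let G[τ] be a Moore–Penrose pseudoinverse of Γ[τ], and assume the range of the linear map θ ↦ Ξ[τ] θ equals {v ∈ ℝⁿ : Γ[τ] G[τ] (A v) = A v}. Let X[1], ..., X[T+1] (n×n) and U[1], ..., U[T] (m×n) satisfy: every column of X[1] lies in the range of θ ↦ Ξ[1] θ; X[τ+1] = A X[τ] + B U[τ] for all τ; and for each τ there exists a real (m+q)×n matrix Λ[τ] with U[τ] = [I_m 0] G[τ] A X[τ] + [I_m 0](I − G[τ] Γ[τ]) Λ[τ]. Then A X[T] + B U[T] = 0. -/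
/-!
By induction on `τ`, the columns of `X τ` lie in the range of `Ξ τ`. For the step, put
`W = G A X + (I - G Γ) Λ`. Since `Γ G Γ = Γ` and `Γ G` fixes `A X`, we get `Γ W = A X`;
splitting `W` into its row blocks `W₁, W₂` gives `U = W₁` and `Γ W = -B W₁ + Ξ' W₂`, so
`A X + B U = Ξ' W₂` with `Ξ' = Ξ (τ + 1)`. At `τ = T + 1` we have `Ξ = 0`, so `X (T + 1) = 0`.
-/

open Matrix

namespace Matrix

variable {R ι κ μ ν : Type*}

section Columns

variable [Fintype κ] [NonUnitalNonAssocSemiring R]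

lemma col_mul (M : Matrix ι κ R) (N : Matrix κ ν R) (j : ν) :
    (M * N).col j = M *ᵥ N.col j :=
  rfl

lemma mul_eq_mul_of_forall_mulVec_col_eq {M N : Matrix ι κ R} {X : Matrix κ ν R}
    (h : ∀ j, M *ᵥ X.col j = N *ᵥ X.col j) : M * X = N * X :=
  ext_col fun j => by rw [col_mul, col_mul, h]

lemma exists_eq_mul_of_forall_col_mem_range {M : Matrix ι κ R} {X : Matrix ι ν R}
    (h : ∀ j, X.col j ∈ Set.range M.mulVec) : ∃ Θ, X = M * Θ := by
  choose θ hθ using h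
  exact ⟨(of θ)ᵀ, ext_col fun j => (hθ j).symm⟩

end Columns

lemma fromCols_mul [Fintype μ] [Fintype ν] [Semiring R]
    (B₁ : Matrix ι μ R) (B₂ : Matrix ι ν R) (W : Matrix (μ ⊕ ν) κ R) :
    fromCols B₁ B₂ * W = B₁ * W.toRows₁ + B₂ * W.toRows₂ := by
  conv_lhs => rw [← fromRows_toRows W]
  exact fromCols_mul_fromRows B₁ B₂ W.toRows₁ W.toRows₂

lemma mul_one_sub_mul_eq_zero [Fintype ι] [Fintype κ] [DecidableEq κ] [Ring R]
    {Γ : Matrix ι κ R} {G : Matrix κ ι R} (hG : Γ * G * Γ = Γ) : Γ * (1 - G * Γ) = 0 := by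
  rw [Matrix.mul_sub, Matrix.mul_one, ← Matrix.mul_assoc, hG, sub_self]

end Matrix

section BackwardStep

variable {R ι μ ν κ : Type*} [Ring R] [Fintype ι] [Fintype μ] [Fintype ν] [DecidableEq μ]
  [DecidableEq ν]

theorem exists_add_mul_eq_mul_of_mul_eq {A : Matrix ι ι R} {B : Matrix ι μ R}
    {Ξ : Matrix ι ν R} {Γ : Matrix ι (μ ⊕ ν) R} (hΓ : Γ = fromCols (-B) Ξ)
    {G : Matrix (μ ⊕ ν) ι R} (hG : Γ * G * Γ = Γ) {X : Matrix ι κ R}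
    (hX : Γ * G * A * X = A * X) {E : Matrix μ (μ ⊕ ν) R} (hE : E = fromCols 1 0)
    {U : Matrix μ κ R} (Λ : Matrix (μ ⊕ ν) κ R)
    (hU : U = E * G * A * X + E * (1 - G * Γ) * Λ) :
    ∃ Θ, A * X + B * U = Ξ * Θ := by
  set W := G * A * X + (1 - G * Γ) * Λ
  have hΓW : Γ * W = A * X := by
    rw [Matrix.mul_add, ← Matrix.mul_assoc Γ (1 - G * Γ), mul_one_sub_mul_eq_zero hG,
      Matrix.zero_mul, add_zero, ← hX]
    simp only [Matrix.mul_assoc]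
  have hUW : U = W.toRows₁ := by
    have hUEW : U = E * W := by simp only [hU, W, Matrix.mul_add, Matrix.mul_assoc]
    rw [hUEW, hE, fromCols_mul, Matrix.one_mul, Matrix.zero_mul, add_zero]
  refine ⟨W.toRows₂, ?_⟩
  rw [← hΓW, hΓ, fromCols_mul, hUW, Matrix.neg_mul]
  abel

end BackwardStep

theorem dp_boundary_condition_correct (n m q T : ℕ) (hT : 1 ≤ T)
    (A : Matrix (Fin n) (Fin n) ℝ) (B : Matrix (Fin n) (Fin m) ℝ)
    (Ξ : ℕ → Matrix (Fin n) (Fin q) ℝ) (hΞT : Ξ (T + 1) = 0)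
    (Γ : ℕ → Matrix (Fin n) (Fin m ⊕ Fin q) ℝ)
    (hΓ : ∀ τ, 1 ≤ τ → τ ≤ T → Γ τ = Matrix.fromCols (-B) (Ξ (τ + 1)))
    (G : ℕ → Matrix (Fin m ⊕ Fin q) (Fin n) ℝ)
    (hG : ∀ τ, 1 ≤ τ → τ ≤ T → IsMoorePenroseInv (Γ τ) (G τ))
    (hrange : ∀ τ, 1 ≤ τ → τ ≤ T →
      Set.range (Ξ τ).mulVec =
        {v : Fin n → ℝ | (Γ τ).mulVec ((G τ).mulVec (A.mulVec v)) = A.mulVec v})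
    (E : Matrix (Fin m) (Fin m ⊕ Fin q) ℝ)
    (hE : E = Matrix.fromCols (1 : Matrix (Fin m) (Fin m) ℝ)
      (0 : Matrix (Fin m) (Fin q) ℝ))
    (X : ℕ → Matrix (Fin n) (Fin n) ℝ) (U : ℕ → Matrix (Fin m) (Fin n) ℝ)
    (hX1 : ∀ j : Fin n, (fun i => X 1 i j) ∈ Set.range (Ξ 1).mulVec)
    (hdyn : ∀ τ, 1 ≤ τ → τ ≤ T → X (τ + 1) = A * X τ + B * U τ)
    (hU : ∀ τ, 1 ≤ τ → τ ≤ T → ∃ Λ : Matrix (Fin m ⊕ Fin q) (Fin n) ℝ,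
      U τ = E * G τ * A * X τ + E * (1 - G τ * Γ τ) * Λ) :
    A * X T + B * U T = 0 := by
  have hfactor :
      ∀ τ, 1 ≤ τ → τ ≤ T + 1 → ∃ Θ : Matrix (Fin q) (Fin n) ℝ, X τ = Ξ τ * Θ := by
    intro τ h1
    induction τ, h1 using Nat.le_induction with
    | base => exact fun _ => exists_eq_mul_of_forall_col_mem_range hX1
    | succ τ h1 ih =>
      intro hτ
      obtain ⟨Θ, hΘ⟩ := ih (by omega)
      obtain ⟨Λ, hΛ⟩ := hU τ h1 (by omega)
      have hfix : Γ τ * G τ * A * X τ = A * X τ := by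
        refine mul_eq_mul_of_forall_mulVec_col_eq fun j => ?_
        have hmem : (X τ).col j ∈ Set.range (Ξ τ).mulVec :=
          ⟨Θ.col j, by rw [hΘ, col_mul]⟩
        rw [hrange τ h1 (by omega)] at hmem
        simpa only [← mulVec_mulVec] using hmem.out
      rw [hdyn τ h1 (by omega)]
      exact exists_add_mul_eq_mul_of_mul_eq (hΓ τ h1 (by omega)) (hG τ h1 (by omega)).1 hfix hE
        Λ hΛ
  obtain ⟨Θ, hΘ⟩ := hfactor (T + 1) (by omega) le_rfl
  rw [← hdyn T hT le_rfl, hΘ, hΞT, Matrix.zero_mul]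
end
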